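/- Let G be a graph, S a Grundy dominating sequence of G, and A ⊆ V(G) a set of open twins with A ∩ Ŝ ≠ ∅, where Ŝ is the set of vertices appearing in S. If the first vertex of A appearing in S footprints itself (i.e., is not in the union of closed neighborhoods of earlier vertices of S), then there exists a Grundy dominating sequence of G containing all vertices of A, with all vertices of A appearing consecutively. -/

import Mathlib

open Finset

variable {V : Type*}

/-- The closed neighborhood of a vertex. -/
def CN (G : SimpleGraph V) (v : V) : Set V := insert v (G.neighborSet v)

/-- A closed neighborhood (legal) sequence: distinct vertices, each footprinting
a vertex not dominated by the closed neighborhoods of earlier vertices. -/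
def IsCNSeq (G : SimpleGraph V) (S : List V) : Prop :=
  S.Nodup ∧ ∀ i : Fin S.length, ∃ u, u ∈ CN G (S.get i) ∧
    ∀ j : Fin S.length, j < i → u ∉ CN G (S.get j)

/-- A dominating sequence: a closed neighborhood sequence whose vertex set dominates. -/
def IsDomSeq (G : SimpleGraph V) (S : List V) : Prop :=
  IsCNSeq G S ∧ ∀ v : V, ∃ u ∈ S, v ∈ CN G u

/-- The Grundy domination number: the maximum length of a dominating sequence. -/
noncomputable def grundyDom (G : SimpleGraph V) : ℕ :=
  sSup {n | ∃ S : List V, IsDomSeq G S ∧ S.length = n}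

/-!
Write `S = P ++ x :: D`, where `x` is the first vertex of `A` in `S`, and replace `x :: D` by an
enumeration `L` of `A` followed by the vertices `T` of `D` that footprint some vertex outside `A`.
Since `P` dominates no twin, each twin footprints itself right after `P`; a vertex of `T` keeps its
footprint `u ∉ A`, because a twin can only dominate `u` through `N(x)`, which `x` had already
dominated in `S`. The first dominator in `S` of a vertex outside `A` lies in `P`, is `x`, or lies
in `T`, so the new sequence dominates. Finally, every vertex of `x :: D` outside `T` footprints some
vertex of `A` in `S`, and distinct vertices have distinct footprints, so there are at most `|A|`
of them: the new sequence is at least as long as `S`.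
-/

namespace List

variable {α : Type*}

lemma pair_sublist_append_iff {a b : α} {l₁ l₂ : List α} :
    [a, b] <+ l₁ ++ l₂ ↔ [a, b] <+ l₁ ∨ (a ∈ l₁ ∧ b ∈ l₂) ∨ [a, b] <+ l₂ := by
  rw [sublist_append_iff]
  constructor
  · rintro ⟨r₁, r₂, h, h₁, h₂⟩
    rcases r₁ with _ | ⟨c, _ | ⟨d, _ | ⟨e, r⟩⟩⟩ <;> simp only [nil_append, cons_append,
      cons.injEq, reduceCtorEq] at h
    · exact .inr (.inr (h ▸ h₂))
    · obtain ⟨rfl, rfl⟩ := h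
      exact .inr (.inl ⟨singleton_sublist.1 h₁, singleton_sublist.1 h₂⟩)
    · obtain ⟨rfl, rfl, rfl⟩ := h
      exact .inl h₁
    · simp at h
  · rintro (h | ⟨h₁, h₂⟩ | h)
    · exact ⟨[a, b], [], by simp, h, nil_sublist _⟩
    · exact ⟨[a], [b], rfl, singleton_sublist.2 h₁, singleton_sublist.2 h₂⟩
    · exact ⟨[], [a, b], rfl, nil_sublist _, h⟩

lemma pair_sublist_or_pair_sublist {a b : α} {l : List α} (ha : a ∈ l) (hb : b ∈ l)
    (hab : a ≠ b) : [a, b] <+ l ∨ [b, a] <+ l := by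
  induction l with
  | nil => simp at ha
  | cons c l ih =>
    rcases mem_cons.1 ha with rfl | ha' <;> rcases mem_cons.1 hb with rfl | hb'
    · exact absurd rfl hab
    · exact .inl ((singleton_sublist.2 hb').cons_cons a)
    · exact .inr ((singleton_sublist.2 ha').cons_cons b)
    · exact (ih ha' hb').imp (·.cons c) (·.cons c)

lemma mem_of_pair_sublist_cons {a b c : α} {l : List α} (h : [a, b] <+ c :: l) :
    b ∈ l := by
  rcases sublist_cons_iff.1 h with h | ⟨r, hr, hr'⟩
  · exact h.subset (by simp)
  · obtain ⟨-, rfl⟩ := cons.inj hr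
    exact singleton_sublist.1 hr'

lemma pair_sublist_append_cons {a b : α} {l₁ l₂ : List α} (hb : b ∈ l₂) :
    [a, b] <+ l₁ ++ a :: l₂ :=
  sublist_append_of_sublist_right ((singleton_sublist.2 hb).cons_cons a)

lemma Nodup.exists_mem_forall_pair_sublist_not {l : List α} (hl : l.Nodup) {p : α → Prop}
    (h : ∃ a ∈ l, p a) : ∃ a ∈ l, p a ∧ ∀ b, [b, a] <+ l → ¬ p b := by
  induction l with
  | nil => simp at h
  | cons c l ih =>
    obtain ⟨hc, hl⟩ := nodup_cons.1 hl
    by_cases hpc : p c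
    · exact ⟨c, mem_cons_self, hpc, fun b hb => absurd (mem_of_pair_sublist_cons hb) hc⟩
    · obtain ⟨a, ha, hpa⟩ := h
      obtain ⟨a, ha, hpa, hfirst⟩ :=
        ih hl ⟨a, (mem_cons.1 ha).resolve_left (by rintro rfl; exact hpc hpa), hpa⟩
      refine ⟨a, mem_cons_of_mem c ha, hpa, fun b hb => ?_⟩
      rcases sublist_cons_iff.1 hb with hb | ⟨r, hr, -⟩
      · exact hfirst b hb
      · obtain ⟨rfl, -⟩ := cons.inj hr
        exact hpc

lemma Nodup.forall_pair_sublist_get_iff {l : List α} (hl : l.Nodup) (i : Fin l.length)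
    {p : α → Prop} : (∀ a, [a, l.get i] <+ l → p a) ↔ ∀ j : Fin l.length, j < i → p (l.get j) := by
  have : (∀ a, [a, l.get i] <+ l → p a) ↔ l.Pairwise (fun a b => b = l.get i → p a) :=
    ⟨fun h => pairwise_of_forall_sublist fun hab hb => h _ (hb ▸ hab),
      fun h a ha => h.forall_sublist ha rfl⟩
  rw [this, pairwise_iff_getElem]
  constructor
  · intro h j hj
    exact h j i j.2 i.2 hj rfl
  · intro h j k hj hk hjk hki
    obtain rfl : k = i := by
      simpa [hl.getElem_inj_iff] using hki
    exact h ⟨j, hj⟩ hjk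

lemma forall_mem_take_iff_get {l : List α} (i : Fin l.length) {p : α → Prop} :
    (∀ a ∈ l.take i, p a) ↔ ∀ j : Fin l.length, j < i → p (l.get j) := by
  simp only [mem_take_iff_getElem, lt_min_iff]
  constructor
  · intro h j hj
    exact h _ ⟨j, ⟨hj, j.2⟩, rfl⟩
  · rintro h _ ⟨j, ⟨hj, hjl⟩, rfl⟩
    exact h ⟨j, hjl⟩ hj

lemma pair_sublist_append_iff_of_notMem_right {a b : α} {l₁ l₂ : List α} (hb : b ∉ l₂) :
    [a, b] <+ l₁ ++ l₂ ↔ [a, b] <+ l₁ := by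
  rw [pair_sublist_append_iff]
  refine ⟨?_, .inl⟩
  rintro (h | ⟨-, h⟩ | h)
  · exact h
  · exact absurd h hb
  · exact absurd (h.subset (by simp)) hb

lemma pair_sublist_append_iff_of_notMem_left {a b : α} {l₁ l₂ : List α} (hb : b ∉ l₁) :
    [a, b] <+ l₁ ++ l₂ ↔ a ∈ l₁ ∧ b ∈ l₂ ∨ [a, b] <+ l₂ := by
  rw [pair_sublist_append_iff, or_iff_right]
  exact fun h => hb (h.subset (by simp))

lemma get_mem_of_le_of_le_of_append {l₁ l₂ l₃ : List α} {p : α → Prop}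
    (h₁ : ∀ a ∈ l₁, ¬ p a) (h₂ : ∀ a ∈ l₂, p a) (h₃ : ∀ a ∈ l₃, ¬ p a)
    {i j k : Fin (l₁ ++ l₂ ++ l₃).length} (hij : i ≤ j) (hjk : j ≤ k)
    (hi : p ((l₁ ++ l₂ ++ l₃).get i)) (hk : p ((l₁ ++ l₂ ++ l₃).get k)) :
    p ((l₁ ++ l₂ ++ l₃).get j) := by
  simp only [get_eq_getElem, getElem_append, length_append] at hi hk ⊢
  have hi₁ : l₁.length ≤ i := by
    by_contra! h
    simp only [show (i : ℕ) < l₁.length + l₂.length by omega, h, dite_true] at hi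
    exact h₁ _ (getElem_mem _) hi
  have hk₂ : k < l₁.length + l₂.length := by
    by_contra h
    simp only [h, dite_false] at hk
    exact h₃ _ (getElem_mem _) hk
  simp only [show (j : ℕ) < l₁.length + l₂.length by omega, show ¬ (j : ℕ) < l₁.length by omega,
    dite_true, dite_false]
  exact h₂ _ (getElem_mem _)

end List

open scoped List

lemma mem_CN_self (G : SimpleGraph V) (v : V) : v ∈ CN G v := Set.mem_insert _ _

variable {G : SimpleGraph V}

lemma mem_CN_iff_of_neighborSet_eq {a x u : V} (h : G.neighborSet a = G.neighborSet x) :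
    u ∈ CN G a ↔ u = a ∨ G.Adj x u := by
  rw [CN, Set.mem_insert_iff, ← SimpleGraph.mem_neighborSet, h, SimpleGraph.mem_neighborSet]

lemma not_adj_of_neighborSet_eq {a b : V} (h : G.neighborSet a = G.neighborSet b) :
    ¬ G.Adj a b := fun hab =>
  G.irrefl (by rwa [← SimpleGraph.mem_neighborSet, ← h, SimpleGraph.mem_neighborSet])

lemma notMem_CN_of_neighborSet_eq {a x t : V} (h : G.neighborSet a = G.neighborSet x)
    (hta : t ≠ a) (hx : x ∉ CN G t) : a ∉ CN G t := by
  rintro (rfl | hta')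
  · exact hta rfl
  · have hxt : G.Adj x t := by
      rw [← SimpleGraph.mem_neighborSet, ← h]
      exact hta'.symm
    exact hx (Set.mem_insert_of_mem _ hxt.symm)

/-- In `S`, the vertex `s` footprints `u`; `[t, s] <+ S` says that `t` occurs before `s`. -/
def Footprints (G : SimpleGraph V) (S : List V) (s u : V) : Prop :=
  u ∈ CN G s ∧ ∀ t, [t, s] <+ S → u ∉ CN G t

lemma isCNSeq_iff_footprints {S : List V} :
    IsCNSeq G S ↔ S.Nodup ∧ ∀ s ∈ S, ∃ u, Footprints G S s u := by
  refine and_congr_right fun hS => ?_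
  simp only [List.forall_mem_iff_get, Footprints, List.Nodup.forall_pair_sublist_get_iff hS]

lemma Footprints.of_sublist {S S' : List V} {s u : V} (h : Footprints G S s u)
    (hS : S' <+ S) : Footprints G S' s u :=
  ⟨h.1, fun t ht => h.2 t (ht.trans hS)⟩

lemma Footprints.append_right {S R : List V} {s u : V} (h : Footprints G S s u) (hs : s ∉ R) :
    Footprints G (S ++ R) s u :=
  ⟨h.1, fun t ht => h.2 t ((List.pair_sublist_append_iff_of_notMem_right hs).1 ht)⟩

lemma footprints_append_iff_of_notMem_left {S R : List V} {s u : V} (hsS : s ∉ S)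
    (hsR : s ∈ R) :
    Footprints G (S ++ R) s u ↔ Footprints G R s u ∧ ∀ t ∈ S, u ∉ CN G t := by
  simp only [Footprints, List.pair_sublist_append_iff_of_notMem_left hsS, hsR, and_true,
    or_imp, forall_and]
  tauto

lemma Footprints.eq_of_mem {S : List V} {s s' u : V} (h : Footprints G S s u)
    (h' : Footprints G S s' u) (hs : s ∈ S) (hs' : s' ∈ S) : s = s' := by
  by_contra hne
  rcases List.pair_sublist_or_pair_sublist hs hs' hne with hss' | hs's
  · exact h'.2 s hss' h.1
  · exact h.2 s' hs's h'.1

lemma Footprints.eq_of_neighborSet_eq {S : List V} {a x u : V} (h : Footprints G S a u)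
    (htw : G.neighborSet a = G.neighborSet x) (hxa : [x, a] <+ S) : u = a := by
  rcases (mem_CN_iff_of_neighborSet_eq htw).1 h.1 with hua | hxu
  · exact hua
  · exact absurd (Set.mem_insert_of_mem _ hxu) (h.2 x hxa)

lemma length_le_of_forall_exists_footprints_mem {S Q L : List V} (hQ : Q.Nodup) (hQS : Q ⊆ S)
    (h : ∀ s ∈ Q, ∃ u ∈ L, Footprints G S s u) : Q.length ≤ L.length := by
  choose! f hfL hf using h
  rw [← List.length_map f]
  refine (hQ.map_on fun s hs s' hs' hss' => ?_).length_le_of_subset ?_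
  · exact (hf s hs).eq_of_mem (hss' ▸ hf s' hs') (hQS hs) (hQS hs')
  · simpa only [List.subset_def, List.mem_map, forall_exists_index, and_imp,
      forall_apply_eq_imp_iff₂] using hfL

lemma IsDomSeq.length_le_grundyDom [Fintype V] {S : List V} (hS : IsDomSeq G S) :
    S.length ≤ grundyDom G :=
  le_csSup ⟨Fintype.card V, fun _ ⟨_, h, hn⟩ => hn ▸ h.1.1.length_le_card⟩ ⟨S, hS, rfl⟩

lemma footprints_self_of_twins {L : List V} {x s : V} (hL : L.Nodup)
    (hA : ∀ a ∈ L, G.neighborSet a = G.neighborSet x) (hs : s ∈ L) : Footprints G L s s := by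
  refine ⟨mem_CN_self G s, fun t ht => ?_⟩
  have hts : t ≠ s := by
    rintro rfl
    exact List.nodup_iff_sublist.1 hL t ht
  rw [mem_CN_iff_of_neighborSet_eq (hA t (ht.subset (by simp))), not_or]
  exact ⟨hts.symm, fun hxs => not_adj_of_neighborSet_eq (hA s hs) hxs.symm⟩

section Rearrangement

variable {P D L : List V} {x : V} {A : Set V}

open Classical in
noncomputable def footprintingOutside (G : SimpleGraph V) (S : List V) (A : Set V)
    (D : List V) : List V :=
  D.filter fun s => ∃ u ∉ A, Footprints G S s u

lemma mem_footprintingOutside {S : List V} {s : V} :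
    s ∈ footprintingOutside G S A D ↔ s ∈ D ∧ ∃ u ∉ A, Footprints G S s u := by
  simp [footprintingOutside]

lemma footprintingOutside_sublist {S : List V} : footprintingOutside G S A D <+ D :=
  List.filter_sublist

lemma notMem_of_mem_footprintingOutside (hA : ∀ a ∈ A, G.neighborSet a = G.neighborSet x)
    {s : V} (hs : s ∈ footprintingOutside G (P ++ x :: D) A D) : s ∉ A := by
  obtain ⟨hsD, u, huA, hu⟩ := mem_footprintingOutside.1 hs
  intro hsA
  exact huA (hu.eq_of_neighborSet_eq (hA s hsA) (List.pair_sublist_append_cons hsD) ▸ hsA)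

lemma nodup_append_twins_append (hS : (P ++ x :: D).Nodup)
    (hA : ∀ a ∈ A, G.neighborSet a = G.neighborSet x) (hPA : ∀ a ∈ A, ∀ t ∈ P, a ∉ CN G t)
    (hL : L.Nodup) (hLA : ∀ a ∈ L, a ∈ A) :
    (P ++ (L ++ footprintingOutside G (P ++ x :: D) A D)).Nodup := by
  obtain ⟨hP, hxD, hPxD⟩ := List.nodup_append.1 hS
  refine List.nodup_append.2 ⟨hP, List.nodup_append.2 ⟨hL, ?_, ?_⟩, ?_⟩
  · exact ((List.nodup_cons.1 hxD).2).filter _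
  · rintro a ha b hb rfl
    exact notMem_of_mem_footprintingOutside hA hb (hLA a ha)
  · rintro a ha b hb rfl
    rcases List.mem_append.1 hb with hb | hb
    · exact hPA a (hLA a hb) a ha (mem_CN_self G a)
    · exact hPxD a ha a (List.mem_cons_of_mem x (mem_footprintingOutside.1 hb).1) rfl

lemma isCNSeq_append_twins_append (hS : IsCNSeq G (P ++ x :: D))
    (hA : ∀ a ∈ A, G.neighborSet a = G.neighborSet x) (hPA : ∀ a ∈ A, ∀ t ∈ P, a ∉ CN G t)
    (hL : L.Nodup) (hLA : ∀ a ∈ L, a ∈ A) :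
    IsCNSeq G (P ++ (L ++ footprintingOutside G (P ++ x :: D) A D)) := by
  set T := footprintingOutside G (P ++ x :: D) A D
  rw [isCNSeq_iff_footprints] at hS ⊢
  have hnd := nodup_append_twins_append hS.1 hA hPA hL hLA
  obtain ⟨-, hLT, hdisj⟩ := List.nodup_append.1 hnd
  refine ⟨hnd, fun s hs => ?_⟩
  rcases List.mem_append.1 hs with hsP | hsLT
  · obtain ⟨u, hu⟩ := hS.2 s (List.mem_append_left _ hsP)
    exact ⟨u, (hu.of_sublist (List.sublist_append_left _ _)).append_right
      fun h => hdisj s hsP s h rfl⟩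
  have hsP : s ∉ P := fun h => hdisj s h s hsLT rfl
  rcases List.mem_append.1 hsLT with hsL | hsT
  · have hsA := hLA s hsL
    have hsT : s ∉ T := fun h => notMem_of_mem_footprintingOutside hA h hsA
    exact ⟨s, (footprints_append_iff_of_notMem_left hsP hsLT).2
      ⟨(footprints_self_of_twins hL (fun a ha => hA a (hLA a ha)) hsL).append_right hsT,
        hPA s hsA⟩⟩
  · obtain ⟨hsD, u, huA, hu⟩ := mem_footprintingOutside.1 hsT
    have hsL : s ∉ L := fun h => notMem_of_mem_footprintingOutside hA hsT (hLA s h)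
    have huT : Footprints G T s u := hu.of_sublist (footprintingOutside_sublist.trans
      (List.sublist_append_of_sublist_right (List.sublist_cons_self x D)))
    have huL : ∀ t ∈ L, u ∉ CN G t := fun t ht => by
      rw [mem_CN_iff_of_neighborSet_eq (hA t (hLA t ht)), not_or]
      exact ⟨fun h => huA (h ▸ hLA t ht),
        fun hxu => hu.2 x (List.pair_sublist_append_cons hsD) (Set.mem_insert_of_mem _ hxu)⟩
    have huP : ∀ t ∈ P, u ∉ CN G t := fun t ht =>
      hu.2 t (List.pair_sublist_append_iff.2 (.inr (.inl ⟨ht, List.mem_cons_of_mem x hsD⟩)))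
    exact ⟨u, (footprints_append_iff_of_notMem_left hsP hsLT).2
      ⟨(footprints_append_iff_of_notMem_left hsL hsT).2 ⟨huT, huL⟩, huP⟩⟩

lemma dominates_append_twins_append (hS : IsDomSeq G (P ++ x :: D)) (hxA : x ∈ A)
    (hAL : ∀ a ∈ A, a ∈ L) (v : V) :
    ∃ u ∈ P ++ (L ++ footprintingOutside G (P ++ x :: D) A D), v ∈ CN G u := by
  by_cases hvA : v ∈ A
  · exact ⟨v, by simp [hAL v hvA], mem_CN_self G v⟩
  obtain ⟨s, hsS, hvs, hfirst⟩ := hS.1.1.exists_mem_forall_pair_sublist_not (hS.2 v)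
  rcases List.mem_append.1 hsS with hsP | hsxD
  · exact ⟨s, List.mem_append_left _ hsP, hvs⟩
  rcases List.mem_cons.1 hsxD with rfl | hsD
  · exact ⟨s, by simp [hAL s hxA], hvs⟩
  · exact ⟨s, List.mem_append_right _ (List.mem_append_right _
      (mem_footprintingOutside.2 ⟨hsD, v, hvA, hvs, hfirst⟩)), hvs⟩

lemma length_le_length_append_twins_append (hS : IsCNSeq G (P ++ x :: D))
    (hPA : ∀ a ∈ A, ∀ t ∈ P, a ∉ CN G t) (hxA : x ∈ A) (hAL : ∀ a ∈ A, a ∈ L) :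
    (P ++ x :: D).length ≤ (P ++ (L ++ footprintingOutside G (P ++ x :: D) A D)).length := by
  classical
  set S := P ++ x :: D
  obtain ⟨-, hxD, -⟩ := List.nodup_append.1 hS.1
  have hx : Footprints G S x x := by
    refine ⟨mem_CN_self G x, fun t ht => hPA x hxA t ?_⟩
    have hxP : x ∉ P := fun h => hPA x hxA x h (mem_CN_self G x)
    rcases (List.pair_sublist_append_iff_of_notMem_left hxP).1 ht with ⟨htP, -⟩ | ht
    · exact htP
    · exact absurd (List.mem_of_pair_sublist_cons ht) (List.nodup_cons.1 hxD).1
  set Q := x :: D.filter fun s => !decide (∃ u ∉ A, Footprints G S s u)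
  have hQxD : Q <+ x :: D := List.filter_sublist.cons_cons x
  have hQ : Q.length ≤ L.length := by
    refine length_le_of_forall_exists_footprints_mem (G := G) (hxD.sublist hQxD)
      (hQxD.trans (List.sublist_append_right P _)).subset fun s hs => ?_
    rcases List.mem_cons.1 hs with rfl | hs
    · exact ⟨s, hAL s hxA, hx⟩
    obtain ⟨hsD, hbad⟩ := List.mem_filter.1 hs
    obtain ⟨u, hu⟩ := (isCNSeq_iff_footprints.1 hS).2 s
      (List.mem_append_right P (List.mem_cons_of_mem x hsD))
    refine ⟨u, hAL u (by_contra fun huA => ?_), hu⟩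
    simp only [Bool.not_eq_eq_eq_not, Bool.not_true, decide_eq_false_iff_not] at hbad
    exact hbad ⟨u, huA, hu⟩
  have hD := List.length_eq_length_filter_add (l := D)
    fun s => decide (∃ u ∉ A, Footprints G S s u)
  simp only [footprintingOutside, List.length_append, List.length_cons, S, Q] at hD hQ ⊢
  omega

end Rearrangement

theorem exists_grundy_seq_all_twins_general {V : Type*} [Fintype V]
    (G : SimpleGraph V) (S : List V) (hS : IsDomSeq G S) (hlen : S.length = grundyDom G)
    (A : Set V) (hA : ∀ u ∈ A, ∀ v ∈ A, G.neighborSet u = G.neighborSet v)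
    (i : Fin S.length) (hiA : S.get i ∈ A)
    (hfirst : ∀ j : Fin S.length, j < i → S.get j ∉ A)
    (hfoot : ∀ j : Fin S.length, j < i → S.get i ∉ CN G (S.get j)) :
    ∃ S' : List V, IsDomSeq G S' ∧ S'.length = grundyDom G ∧ (∀ a ∈ A, a ∈ S') ∧
      ∀ p q r : Fin S'.length, p ≤ q → q ≤ r →
        S'.get p ∈ A → S'.get r ∈ A → S'.get q ∈ A := by
  replace hfirst := (List.forall_mem_take_iff_get i (p := (· ∉ A))).2 hfirst
  replace hfoot := (List.forall_mem_take_iff_get i (p := (S.get i ∉ CN G ·))).2 hfoot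
  have hsplit : S = S.take i ++ S.get i :: S.drop (i + 1) := by simp
  set x := S.get i
  set P := S.take i
  set D := S.drop (i + 1)
  have htwins : ∀ a ∈ A, G.neighborSet a = G.neighborSet x := fun a ha => hA a ha x hiA
  have hPA : ∀ a ∈ A, ∀ t ∈ P, a ∉ CN G t := fun a ha t ht =>
    notMem_CN_of_neighborSet_eq (htwins a ha) (fun h => hfirst t ht (h ▸ ha)) (hfoot t ht)
  obtain ⟨L, hL, hLA⟩ : ∃ L : List V, L.Nodup ∧ ∀ a, a ∈ L ↔ a ∈ A :=
    ⟨(Set.toFinite A).toFinset.toList, Finset.nodup_toList _, by simp⟩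
  rw [hsplit] at hS hlen
  have hS' : IsDomSeq G (P ++ (L ++ footprintingOutside G (P ++ x :: D) A D)) :=
    ⟨isCNSeq_append_twins_append hS.1 htwins hPA hL (fun a => (hLA a).1),
      dominates_append_twins_append hS hiA (fun a => (hLA a).2)⟩
  have hle := length_le_length_append_twins_append hS.1 hPA hiA (fun a => (hLA a).2)
  rw [← List.append_assoc] at hS' hle
  refine ⟨_, hS', le_antisymm hS'.length_le_grundyDom (hlen ▸ hle),
    fun a ha => by simp [hLA a, ha], fun p q r => List.get_mem_of_le_of_le_of_append (p := (· ∈ A))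
      hfirst (fun a => (hLA a).1) fun s hs => notMem_of_mem_footprintingOutside htwins hs⟩

/-- If the first vertex of a set `A` of open twins appearing in a Grundy dominating
sequence `S` footprints itself, then there is a Grundy dominating sequence containing
all of `A`, with the vertices of `A` appearing consecutively. -/
theorem exists_grundy_seq_all_twins {V : Type*} [Fintype V] [DecidableEq V]
    (G : SimpleGraph V) (S : List V) (hS : IsDomSeq G S) (hlen : S.length = grundyDom G)
    (A : Set V) (hA : ∀ u ∈ A, ∀ v ∈ A, G.neighborSet u = G.neighborSet v)
    (i : Fin S.length) (hiA : S.get i ∈ A)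
    (hfirst : ∀ j : Fin S.length, j < i → S.get j ∉ A)
    (hfoot : ∀ j : Fin S.length, j < i → S.get i ∉ CN G (S.get j)) :
    ∃ S' : List V, IsDomSeq G S' ∧ S'.length = grundyDom G ∧ (∀ a ∈ A, a ∈ S') ∧
      ∀ p q r : Fin S'.length, p ≤ q → q ≤ r →
        S'.get p ∈ A → S'.get r ∈ A → S'.get q ∈ A :=
  exists_grundy_seq_all_twins_general G S hS hlen A hA i hiA hfirst hfoot
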